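/- The intersection of two Markov blankets of the same target is again a Markov blanket, provided the intersection property holds: if Z₁ and Z₂ are Markov blankets of T and the relation satisfies intersection, then Z₁ ∩ Z₂ is a Markov blanket of T. -/

import Mathlib

/-!
Write `Z₁ = W ∪ Y` with `W = Z₁ ∩ Z₂`, `Y = Z₁ \ Z₂`, and let `X` be everything outside `Z₁`
other than `T`. Everything outside `Z₂` other than `T` is `Y` together with part of `X`, so weak
union applied to the blanket `Z₂` yields `T ⊥ Y | W ∪ X`, while the blanket `Z₁` says
`T ⊥ X | W ∪ Y`. Intersection combines the two into `T ⊥ X ∪ Y | W`, the blanket condition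
for `W`.
-/

open Set

/-- `Z` is a Markov blanket of `T` w.r.t. the conditional-independence relation `CI`. -/
def IsMarkovBlanket {V : Type*} (CI : Set V → Set V → Set V → Prop) (T : V) (Z : Set V) : Prop :=
  Z ⊆ Set.univ \ {T} ∧ CI {T} ((Set.univ \ Z) \ {T}) Z

/-- A Markov boundary: an inclusion-minimal Markov blanket. -/
def IsMarkovBoundary {V : Type*} (CI : Set V → Set V → Set V → Prop) (T : V) (Z : Set V) : Prop :=
  IsMarkovBlanket CI T Z ∧ ∀ Z' ⊂ Z, ¬ IsMarkovBlanket CI T Z'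

/-- `X` and `Y` contain equivalent information about `T` conditioned on `Z`. -/
def EquivInfo {V : Type*} (CI : Set V → Set V → Set V → Prop) (T : V) (X Y Z : Set V) : Prop :=
  ¬ CI {T} X Z ∧ ¬ CI {T} Y Z ∧ CI {T} X (Y ∪ Z) ∧ CI {T} Y (X ∪ Z)

theorem IsMarkovBlanket.notMem {V : Type*} {CI : Set V → Set V → Set V → Prop} {T : V}
    {Z : Set V} (h : IsMarkovBlanket CI T Z) : T ∉ Z :=
  fun hT => (h.1 hT).2 rfl

section BlanketSetAlgebra

variable {V : Type*} {T : V} {Z₁ Z₂ : Set V}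

theorem univ_diff_diff_singleton_eq_diff_union (hT : T ∉ Z₁) :
    (univ \ Z₂) \ {T} = (Z₁ \ Z₂) ∪ ((univ \ (Z₁ ∪ Z₂)) \ {T}) := by
  ext x
  by_cases hx : x = T
  · subst hx; simp [hT]
  · simp only [mem_sdiff, mem_univ, true_and, mem_singleton_iff, mem_union]; tauto

theorem union_univ_diff_diff_singleton_eq_inter_union (hT : T ∉ Z₂) :
    Z₂ ∪ ((univ \ (Z₁ ∪ Z₂)) \ {T}) = (Z₁ ∩ Z₂) ∪ ((univ \ Z₁) \ {T}) := by
  ext x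
  by_cases hx : x = T
  · subst hx; simp [hT]
  · simp only [mem_sdiff, mem_univ, true_and, mem_singleton_iff, mem_union, mem_inter_iff]; tauto

theorem univ_diff_diff_singleton_union_diff (hT : T ∉ Z₁) :
    ((univ \ Z₁) \ {T}) ∪ (Z₁ \ Z₂) = (univ \ (Z₁ ∩ Z₂)) \ {T} := by
  ext x
  by_cases hx : x = T
  · subst hx; simp [hT]
  · simp only [mem_sdiff, mem_univ, true_and, mem_singleton_iff, mem_union, mem_inter_iff]; tauto

end BlanketSetAlgebra

theorem blanket_intersection_of_intersection_property_general {V : Type*}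
    (CI : Set V → Set V → Set V → Prop)
    (weakUnion : ∀ A B C Z : Set V, CI A (B ∪ C) Z → CI A B (Z ∪ C))
(inter : ∀ A B C Z : Set V, CI A B (Z ∪ C) → CI A C (Z ∪ B) → CI A (B ∪ C) Z)
    (T : V) (Z₁ Z₂ : Set V)
    (h₁ : IsMarkovBlanket CI T Z₁) (h₂ : IsMarkovBlanket CI T Z₂) :
    IsMarkovBlanket CI T (Z₁ ∩ Z₂) := by
  refine ⟨fun x hx => h₁.1 hx.1, ?_⟩
  have hX : CI {T} ((univ \ Z₁) \ {T}) ((Z₁ ∩ Z₂) ∪ (Z₁ \ Z₂)) := by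
    rw [inter_union_sdiff]
    exact h₁.2
  have hY : CI {T} (Z₁ \ Z₂) ((Z₁ ∩ Z₂) ∪ ((univ \ Z₁) \ {T})) := by
    have h₂' := h₂.2
    rw [univ_diff_diff_singleton_eq_diff_union h₁.notMem] at h₂'
    rw [← union_univ_diff_diff_singleton_eq_inter_union h₂.notMem]
    exact weakUnion _ _ _ _ h₂'
  rw [← univ_diff_diff_singleton_union_diff h₁.notMem]
  exact inter _ _ _ _ hX hY

theorem blanket_intersection_of_intersection_property {V : Type*} [Fintype V]
    (CI : Set V → Set V → Set V → Prop)
(symm : ∀ A B C : Set V, CI A B C → CI B A C)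
    (decomp : ∀ A B C Z : Set V, CI A (B ∪ C) Z → CI A B Z)
    (weakUnion : ∀ A B C Z : Set V, CI A (B ∪ C) Z → CI A B (Z ∪ C))
    (contraction : ∀ A B C Z : Set V, CI A B (Z ∪ C) → CI A C Z → CI A (B ∪ C) Z)
(inter : ∀ A B C Z : Set V, CI A B (Z ∪ C) → CI A C (Z ∪ B) → CI A (B ∪ C) Z)
    (T : V) (Z₁ Z₂ : Set V)
    (h₁ : IsMarkovBlanket CI T Z₁) (h₂ : IsMarkovBlanket CI T Z₂) :
    IsMarkovBlanket CI T (Z₁ ∩ Z₂) :=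
  blanket_intersection_of_intersection_property_general CI weakUnion inter T Z₁ Z₂ h₁ h₂
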